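/- Suppose v and w are fully commutative permutations in S_n with w = v·s_i, ℓ(w) = ℓ(v) + 1, and i ∈ supp(v). If P(v) ≠ P(w), then w is a crowded permutation, i.e., Row₂(P(w)) is a crowded set. -/

import Mathlib

/-- The value in position `j` (0-indexed) of the one-line notation of `w`,
extended by the identity outside the range `[0, n)`. -/
def entry {n : ℕ} (w : Equiv.Perm (Fin n)) (j : ℕ) : ℕ :=
  if h : j < n then (w ⟨j, h⟩ : ℕ) else j

/-- One-line notation of a permutation, as a list of natural numbers (0-indexed values). -/
def oneLine {n : ℕ} (w : Equiv.Perm (Fin n)) : List ℕ :=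
  List.ofFn (fun i => (w i : ℕ))

/-- A permutation is fully commutative iff it avoids the pattern 321. -/
def FullyCommutative {n : ℕ} (w : Equiv.Perm (Fin n)) : Prop :=
  ¬ ∃ i j k : Fin n, i < j ∧ j < k ∧ w k < w j ∧ w j < w i

/-- A permutation is boolean iff it avoids the patterns 321 and 3412. -/
def BooleanPerm {n : ℕ} (w : Equiv.Perm (Fin n)) : Prop :=
  FullyCommutative w ∧
    ¬ ∃ i j k l : Fin n, i < j ∧ j < k ∧ k < l ∧
        w k < w l ∧ w l < w i ∧ w i < w j

/-- The Coxeter length of a permutation: its number of inversions. -/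
def invCount {n : ℕ} (w : Equiv.Perm (Fin n)) : ℕ :=
  (Finset.univ.filter fun p : Fin n × Fin n => p.1 < p.2 ∧ w p.2 < w p.1).card

/-- The support of `w`: the set of (0-indexed) indices `i` such that the simple
transposition `s_i` appears in some (equivalently, every) reduced word of `w`;
equivalently, `{w(0),…,w(i)} ≠ {0,…,i}`, i.e. `max {w(j) : j ≤ i} > i`. -/
def Supp {n : ℕ} (w : Equiv.Perm (Fin n)) : Set ℕ :=
  {i | ∃ j : Fin n, (j : ℕ) ≤ i ∧ i < (w j : ℕ)}

/-- The simple transposition `s_i`, swapping positions `i` and `i+1` (0-indexed). -/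
def simpleTr {n : ℕ} (i : ℕ) (h : i + 1 < n) : Equiv.Perm (Fin n) :=
  Equiv.swap ⟨i, by omega⟩ ⟨i + 1, h⟩

/-- Schensted row insertion of a value into a tableau (a list of rows). -/
def rowInsert : List (List ℕ) → ℕ → List (List ℕ)
  | [], x => [[x]]
  | r :: rest, x =>
    match r.find? (fun y => decide (x < y)) with
    | none => (r ++ [x]) :: rest
    | some y => (r.map fun z => if z = y then x else z) :: rowInsert rest y

/-- RSK insertion tableau of a list. -/
def RSKList (l : List ℕ) : List (List ℕ) := l.foldl rowInsert []

/-- RSK insertion tableau `P(w)` of a permutation. -/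
def RSKP {n : ℕ} (w : Equiv.Perm (Fin n)) : List (List ℕ) := RSKList (oneLine w)

/-- RSK recording tableau `Q(w) = P(w⁻¹)`. -/
def RSKQ {n : ℕ} (w : Equiv.Perm (Fin n)) : List (List ℕ) := RSKP w⁻¹

/-- The set of entries in the first row of a tableau. -/
def Row1 (T : List (List ℕ)) : Finset ℕ := (T.getD 0 []).toFinset

/-- The set of entries in the second row of a tableau. -/
def Row2 (T : List (List ℕ)) : Finset ℕ := (T.getD 1 []).toFinset

/-- `BumpsAt l k z` : during the RSK insertion of the list `l`, the insertion of
the `(k+1)`-st letter of `l` bumps the value `z` from the first row to the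
second row (`z` is the smallest first-row entry larger than the inserted letter). -/
def BumpsAt (l : List ℕ) (k : ℕ) (z : ℕ) : Prop :=
  k < l.length ∧
    ((RSKList (l.take k)).getD 0 []).find? (fun y => decide (l.getD k 0 < y)) = some z

/-- `Bumps l b z` : during the RSK insertion of `l`, the value `b` bumps the
value `z` from the first row to the second row. -/
def Bumps (l : List ℕ) (b z : ℕ) : Prop :=
  ∃ k, l.getD k 0 = b ∧ BumpsAt l k z

/-- A finite set of naturals is crowded if some integer interval `[y, y+2x]`
(with `x > 0`) contains more than `x+1` of its elements. -/
def CrowdedSet (L : Finset ℕ) : Prop :=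
  ∃ x y : ℤ, 0 < x ∧
    x + 1 < ((L.filter fun a : ℕ => y ≤ (a : ℤ) ∧ (a : ℤ) ≤ y + 2 * x).card : ℤ)

/-- A fully commutative permutation is crowded if the second row of its RSK
insertion tableau is a crowded set. -/
def CrowdedPerm {n : ℕ} (w : Equiv.Perm (Fin n)) : Prop :=
  CrowdedSet (Row2 (RSKP w))

/-- Covering relation of the right weak order. -/
def RWCovers {n : ℕ} (u v : Equiv.Perm (Fin n)) : Prop :=
  ∃ i, ∃ h : i + 1 < n, v = u * simpleTr i h ∧ invCount v = invCount u + 1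

/-- The right weak order on `S_n`. -/
def RightWeakLE {n : ℕ} : Equiv.Perm (Fin n) → Equiv.Perm (Fin n) → Prop :=
  Relation.ReflTransGen RWCovers

/-- Covering relation of the left weak order. -/
def LWCovers {n : ℕ} (u v : Equiv.Perm (Fin n)) : Prop :=
  ∃ i, ∃ h : i + 1 < n, v = simpleTr i h * u ∧ invCount v = invCount u + 1

/-- The left weak order on `S_n`. -/
def LeftWeakLE {n : ℕ} : Equiv.Perm (Fin n) → Equiv.Perm (Fin n) → Prop :=
  Relation.ReflTransGen LWCovers

/-- A minimal crowded permutation: a crowded fully commutative permutation all of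
whose strict predecessors (among fully commutative permutations) in the right
weak order are uncrowded. -/
def MinimalCrowded {n : ℕ} (w : Equiv.Perm (Fin n)) : Prop :=
  FullyCommutative w ∧ CrowdedPerm w ∧
    ∀ v : Equiv.Perm (Fin n), FullyCommutative v → RightWeakLE v w → v ≠ w →
      ¬ CrowdedPerm v

/-- `l` is an increasing subsequence of the one-line notation of `w`. -/
def IncreasingSubseq {n : ℕ} (w : Equiv.Perm (Fin n)) (l : List ℕ) : Prop :=
  l.Sublist (oneLine w) ∧ l.Pairwise (· < ·)

/-- The length of a longest increasing subsequence of `w`. -/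
noncomputable def lisLen {n : ℕ} (w : Equiv.Perm (Fin n)) : ℕ :=
  sSup {k | ∃ l : List ℕ, IncreasingSubseq w l ∧ l.length = k}

/-- A consecutive occurrence of the pattern 415263 starting at (0-indexed) position `i`. -/
def Consec415263 {n : ℕ} (w : Equiv.Perm (Fin n)) (i : ℕ) : Prop :=
  i + 5 < n ∧
    entry w (i + 1) < entry w (i + 3) ∧ entry w (i + 3) < entry w (i + 5) ∧
    entry w (i + 5) < entry w i ∧ entry w i < entry w (i + 2) ∧
    entry w (i + 2) < entry w (i + 4)

/-- A consecutive occurrence of the pattern 315264 starting at (0-indexed) position `i`. -/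
def Consec315264 {n : ℕ} (w : Equiv.Perm (Fin n)) (i : ℕ) : Prop :=
  i + 5 < n ∧
    entry w (i + 1) < entry w (i + 3) ∧ entry w (i + 3) < entry w i ∧
    entry w i < entry w (i + 5) ∧ entry w (i + 5) < entry w (i + 2) ∧
    entry w (i + 2) < entry w (i + 4)

/-- An occurrence (not necessarily consecutive) of the pattern 415263 in `w`,
at positions `p 0 < p 1 < ⋯ < p 5`. -/
def Occ415263 {n : ℕ} (w : Equiv.Perm (Fin n)) (p : Fin 6 → Fin n) : Prop :=
  StrictMono p ∧
    w (p 1) < w (p 3) ∧ w (p 3) < w (p 5) ∧ w (p 5) < w (p 0) ∧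
    w (p 0) < w (p 2) ∧ w (p 2) < w (p 4)

/-!
Write `v = p b a s` and `w = p a b s` in one-line notation, with `b < a`.  Both words avoid
`321`, so their insertion tableaux have at most two rows.  If after inserting `p` some first-row
entry lies between `b` and `a`, then `p b a` and `p a b` already have the same tableau.
Otherwise the two tableaux differ only in where `a` sits: first row for `v`, second row for `w`.
Inserting `s` into both simultaneously, they keep differing in a single entry `δ` (first row for
`v`, second row for `w`) until they merge.  Since `i ∈ supp(v)`, the letters of `p` between `b`
and `a`, which all sit in the second row, are numerous enough that, for a suitable `m`,
`2 · #(second row ∩ [m, δ]) + #(letters still to come below δ) + m ≥ δ + 4`.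
Every insertion preserves this inequality, and if the tableaux never merge it makes the second
row of `P(w)` crowded in `[m, δ]`.
-/
open scoped List

def List.Avoids321 (l : List ℕ) : Prop :=
  ∀ x y z : ℕ, [z, y, x] <+ l → ¬ (x < y ∧ y < z)

theorem List.Avoids321.sublist {l l' : List ℕ} (h : l'.Avoids321) (hl : l <+ l') :
    l.Avoids321 :=
  fun x y z hs => h x y z (hs.trans hl)

namespace TwoRowRSK

def tableau (r₁ r₂ : List ℕ) : List (List ℕ) :=
  if r₁ = [] then [] else if r₂ = [] then [r₁] else [r₁, r₂]

theorem tableau_of_ne_nil {r₁ : List ℕ} (r₂ : List ℕ) (h : r₁ ≠ []) :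
    tableau r₁ r₂ = r₁ :: tableau r₂ [] := by
  by_cases h₂ : r₂ = [] <;> simp [tableau, h, h₂]

theorem RSKList_append (l l' : List ℕ) : RSKList (l ++ l') = l'.foldl rowInsert (RSKList l) := by
  simp [RSKList, List.foldl_append]

theorem RSKList_append_singleton (l : List ℕ) (x : ℕ) :
    RSKList (l ++ [x]) = rowInsert (RSKList l) x := by
  simp [RSKList_append]

section Lists

variable {α : Type*}

theorem exists_least_gt [LinearOrder α] {r : List α} {x : α} (h : ∃ y ∈ r, x < y) :
    ∃ z ∈ r, x < z ∧ ∀ y ∈ r, x < y → z ≤ y := by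
  classical
  set S := r.toFinset.filter (x < ·)
  have hS : S.Nonempty := by
    obtain ⟨y, hy, hxy⟩ := h
    exact ⟨y, by simp [S, hy, hxy]⟩
  have hmem : S.min' hS ∈ S := S.min'_mem hS
  simp only [S, Finset.mem_filter, List.mem_toFinset] at hmem
  exact ⟨S.min' hS, hmem.1, hmem.2, fun y hy hxy => S.min'_le y (by simp [S, hy, hxy])⟩

theorem find?_lt_eq_some [LinearOrder α] {r : List α} (hr : r.Pairwise (· < ·)) {x z : α}
    (hz : z ∈ r) (hxz : x < z) (hmin : ∀ y ∈ r, x < y → z ≤ y) :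
    r.find? (fun y => decide (x < y)) = some z := by
  induction r with
  | nil => simp at hz
  | cons y r ih =>
    rw [List.pairwise_cons] at hr
    by_cases hxy : x < y
    · rcases List.mem_cons.1 hz with rfl | hz
      · simp [hxy]
      · exact absurd (hr.1 z hz) (not_lt.2 (hmin y (by simp) hxy))
    · rw [List.find?_cons_of_neg (by simpa using hxy)]
      have hz : z ∈ r := (List.mem_cons.1 hz).resolve_left fun h => hxy (h ▸ hxz)
      exact ih hr.2 hz fun y hy => hmin y (by simp [hy])

section DecidableEq

variable [DecidableEq α]

abbrev replaceEntry (r : List α) (z x : α) : List α :=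
  r.map fun s => if s = z then x else s

theorem mem_replaceEntry {r : List α} {z x t : α} (hz : z ∈ r) :
    t ∈ replaceEntry r z x ↔ (t ∈ r ∧ t ≠ z) ∨ t = x := by
  simp only [List.mem_map]
  constructor
  · rintro ⟨s, hs, rfl⟩
    by_cases hsz : s = z <;> simp [hsz, hs]
  · rintro (⟨ht, htz⟩ | rfl)
    · exact ⟨t, ht, by simp [htz]⟩
    · exact ⟨z, hz, by simp⟩

theorem replaceEntry_eq_self {r : List α} {z x : α} (hz : z ∉ r) : replaceEntry r z x = r :=
  (List.map_congr_left fun s hs => if_neg fun (h : s = z) => hz (h ▸ hs)).trans (List.map_id' r)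

theorem toFinset_replaceEntry {r : List α} {z x : α} (hz : z ∈ r) :
    (replaceEntry r z x).toFinset = insert x (r.toFinset.erase z) := by
  ext t
  simp only [List.mem_toFinset, mem_replaceEntry hz, Finset.mem_insert, Finset.mem_erase]
  tauto

theorem toFinset_append_singleton (r : List α) (x : α) :
    (r ++ [x]).toFinset = insert x r.toFinset := by
  ext t; simp

end DecidableEq

theorem pairwise_replaceEntry [LinearOrder α] {r : List α} (hr : r.Pairwise (· < ·)) {x z : α}
    (hxr : x ∉ r) (hxz : x < z) (hmin : ∀ y ∈ r, x < y → z ≤ y) :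
    (replaceEntry r z x).Pairwise (· < ·) := by
  rw [List.pairwise_map]
  refine hr.imp_of_mem fun {s s'} hs hs' hss' => ?_
  have below : ∀ y ∈ r, y < z → y < x := fun y hy hyz => by
    have hyx : y ≠ x := fun h => hxr (h ▸ hy)
    by_contra! hxy
    exact absurd (hmin y hy (lt_of_le_of_ne hxy hyx.symm)) (not_le.2 hyz)
  by_cases h : s = z <;> by_cases h' : s' = z <;> simp only [h, h', if_true, if_false]
  · exact absurd hss' (by simp [h, h'])
  · exact hxz.trans (h ▸ hss')
  · exact below s hs (h' ▸ hss')
  · exact hss'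

end Lists

theorem rowInsert_cons_of_find?_eq_some {r : List ℕ} {x z : ℕ}
    (h : r.find? (fun y => decide (x < y)) = some z) (rest : List (List ℕ)) :
    rowInsert (r :: rest) x = replaceEntry r z x :: rowInsert rest z := by
  simp [rowInsert, h]

theorem rowInsert_tableau_of_lt {r₁ r₂ : List ℕ} {x : ℕ} (hr : r₁ = [] → r₂ = [])
    (hlt : ∀ y ∈ r₁, y < x) : rowInsert (tableau r₁ r₂) x = tableau (r₁ ++ [x]) r₂ := by
  by_cases h : r₁ = []
  · simp [h, hr h, tableau, rowInsert]
  · have hf : r₁.find? (fun y => decide (x < y)) = none :=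
      List.find?_eq_none.2 fun y hy => by simpa using (hlt y hy).le
    rw [tableau_of_ne_nil r₂ h, tableau_of_ne_nil r₂ (by simp)]
    simp [rowInsert, hf]

/-- `witness` is what keeps a `321`-avoiding word at two rows: if a second-row entry `u` exceeds
a first-row entry `z`, then `u` is followed by a letter `y ∈ [z, u)`, so a new letter `x`
bumping `z` would complete the pattern `u y x`.  Hence a bumped letter exceeds the whole second row
(`Run.row₂_lt_bumped`). -/
structure Run (arr r₁ r₂ : List ℕ) : Prop where
  tableau_eq : RSKList arr = tableau r₁ r₂
  sorted₁ : r₁.Pairwise (· < ·)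
  sorted₂ : r₂.Pairwise (· < ·)
  eq_nil : r₁ = [] → r₂ = []
  mem_iff : ∀ t, t ∈ arr ↔ t ∈ r₁ ∨ t ∈ r₂
  disjoint : ∀ t ∈ r₁, t ∉ r₂
  witness : ∀ u ∈ r₂, ∀ z ∈ r₁, z < u → ∃ y, [u, y] <+ arr ∧ z ≤ y ∧ y < u

theorem Run.nil : Run [] [] [] :=
  ⟨rfl, by simp, by simp, fun _ => rfl, by simp, by simp, by simp⟩

theorem pair_sublist_append {arr : List ℕ} {u : ℕ} (hu : u ∈ arr) (x : ℕ) :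
    [u, x] <+ arr ++ [x] :=
  (List.singleton_sublist.2 hu).append (List.Sublist.refl [x])

theorem Run.append {arr r₁ r₂ : List ℕ} {x : ℕ} (R : Run arr r₁ r₂) (hx : x ∉ arr)
    (hlt : ∀ y ∈ r₁, y < x) : Run (arr ++ [x]) (r₁ ++ [x]) r₂ := by
  have hxr₂ : x ∉ r₂ := fun h => hx ((R.mem_iff x).2 (Or.inr h))
  refine ⟨?_, ?_, R.sorted₂, by simp, fun t => ?_, fun t ht => ?_, fun u hu t ht htu => ?_⟩
  · rw [RSKList_append_singleton, R.tableau_eq, rowInsert_tableau_of_lt R.eq_nil hlt]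
  · exact List.pairwise_append.2 ⟨R.sorted₁, by simp, by simpa using hlt⟩
  · simp only [List.mem_append, List.mem_singleton, R.mem_iff t]; tauto
  · rcases List.mem_append.1 ht with ht | ht
    · exact R.disjoint t ht
    · exact (List.mem_singleton.1 ht) ▸ hxr₂
  · rcases List.mem_append.1 ht with ht | ht
    · obtain ⟨y, hy, h⟩ := R.witness u hu t ht htu
      exact ⟨y, hy.trans (List.sublist_append_left _ _), h⟩
    · obtain rfl := List.mem_singleton.1 ht
      exact ⟨t, pair_sublist_append ((R.mem_iff u).2 (Or.inr hu)) t, le_rfl, htu⟩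

theorem Run.row₂_lt_bumped {arr r₁ r₂ : List ℕ} {x z : ℕ} (R : Run arr r₁ r₂) (hz : z ∈ r₁)
    (hxz : x < z) (havoid : (arr ++ [x]).Avoids321) : ∀ u ∈ r₂, u < z := fun u hu => by
  by_contra! hzu
  have hzu : z < u := lt_of_le_of_ne hzu fun h => R.disjoint z hz (h ▸ hu)
  obtain ⟨y, hy, hzy, hyu⟩ := R.witness u hu z hz hzu
  exact havoid x y u (hy.append (List.Sublist.refl [x])) ⟨by omega, hyu⟩

theorem Run.bump {arr r₁ r₂ : List ℕ} {x z : ℕ} (R : Run arr r₁ r₂) (hx : x ∉ arr)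
    (hz : z ∈ r₁) (hxz : x < z) (hmin : ∀ y ∈ r₁, x < y → z ≤ y)
    (havoid : (arr ++ [x]).Avoids321) :
    Run (arr ++ [x]) (replaceEntry r₁ z x) (r₂ ++ [z]) := by
  have hxr₁ : x ∉ r₁ := fun h => hx ((R.mem_iff x).2 (Or.inl h))
  have hxr₂ : x ∉ r₂ := fun h => hx ((R.mem_iff x).2 (Or.inr h))
  have hzarr : z ∈ arr := (R.mem_iff z).2 (Or.inl hz)
  have hr₂z := R.row₂_lt_bumped hz hxz havoid
  have hfind := find?_lt_eq_some R.sorted₁ hz hxz hmin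
  have hr₁ : r₁ ≠ [] := List.ne_nil_of_mem hz
  refine ⟨?_, pairwise_replaceEntry R.sorted₁ hxr₁ hxz hmin,
    List.pairwise_append.2 ⟨R.sorted₂, by simp, by simpa using hr₂z⟩, by simp [hr₁],
    fun t => ?_, fun t ht => ?_, fun u hu t ht htu => ?_⟩
  · rw [RSKList_append_singleton, R.tableau_eq, tableau_of_ne_nil r₂ hr₁,
      rowInsert_cons_of_find?_eq_some hfind, rowInsert_tableau_of_lt (fun _ => rfl) hr₂z,
      tableau_of_ne_nil (r₁ := replaceEntry r₁ z x) _ (by simpa using hr₁)]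
  · simp only [List.mem_append, List.mem_singleton, mem_replaceEntry hz, R.mem_iff t]
    by_cases htz : t = z
    · subst htz; simp [hz]
    · tauto
  · rw [mem_replaceEntry hz] at ht
    simp only [List.mem_append, List.mem_singleton, not_or]
    rcases ht with ⟨ht, htz⟩ | rfl
    · exact ⟨R.disjoint t ht, htz⟩
    · exact ⟨hxr₂, hxz.ne⟩
  · rw [mem_replaceEntry hz] at ht
    rcases List.mem_append.1 hu with hu | hu
    · rcases ht with ⟨ht, -⟩ | ht
      · obtain ⟨y, hy, h⟩ := R.witness u hu t ht htu
        exact ⟨y, hy.trans (List.sublist_append_left _ _), h⟩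
      · exact ⟨x, pair_sublist_append ((R.mem_iff u).2 (Or.inr hu)) x, ht.le, ht ▸ htu⟩
    · obtain rfl := List.mem_singleton.1 hu
      refine ⟨x, pair_sublist_append hzarr x, ?_, hxz⟩
      rcases ht with ⟨ht, htz⟩ | rfl
      · by_contra! hxt
        exact absurd (hmin t ht hxt) (by omega)
      · exact le_rfl

theorem exists_run {l : List ℕ} (havoid : l.Avoids321) (hnd : l.Nodup) :
    ∃ r₁ r₂, Run l r₁ r₂ := by
  induction l using List.reverseRecOn with
  | nil => exact ⟨[], [], Run.nil⟩
  | append_singleton l x ih =>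
    obtain ⟨r₁, r₂, R⟩ := ih (havoid.sublist (List.sublist_append_left _ _))
      (hnd.sublist (List.sublist_append_left _ _))
    have hx : x ∉ l := fun h => (List.nodup_append.1 hnd).2.2 x h x (by simp) rfl
    by_cases hbig : ∃ y ∈ r₁, x < y
    · obtain ⟨z, hz, hxz, hmin⟩ := exists_least_gt hbig
      exact ⟨_, _, R.bump hx hz hxz hmin havoid⟩
    · push Not at hbig
      refine ⟨_, _, R.append hx fun y hy => lt_of_le_of_ne (hbig y hy) fun h => ?_⟩
      exact hx ((R.mem_iff x).2 (Or.inl (h ▸ hy)))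

end TwoRowRSK

theorem List.card_le_countP {α : Type*} [DecidableEq α] {s : Finset α} {l : List α}
    {p : α → Bool} (h : ∀ t ∈ s, t ∈ l ∧ p t) : s.card ≤ l.countP p := by
  calc s.card ≤ (l.filter p).toFinset.card :=
        Finset.card_le_card fun t ht => by simpa using h t ht
    _ ≤ (l.filter p).length := List.toFinset_card_le _
    _ = l.countP p := List.countP_eq_length_filter.symm

theorem List.countP_add_countP_le {α : Type*} {l : List α} {p q r : α → Bool}
    (hpq : ∀ t, p t → q t → False) (hr : ∀ t, p t ∨ q t → r t) :
    l.countP p + l.countP q ≤ l.countP r := by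
  induction l with
  | nil => simp
  | cons t l ih =>
    have := hpq t
    have := hr t
    simp only [List.countP_cons]
    split_ifs <;> simp_all <;> omega

theorem add_countP_lt_le_length {l : List ℕ} {b : ℕ} (h : ∀ t < b, t ∈ l) :
    b + l.countP (b < ·) ≤ l.length := by
  have hsmall : b ≤ l.countP (· < b) := by
    simpa using List.card_le_countP (s := Finset.range b) (l := l) (p := (· < b)) fun t ht =>
      ⟨h t (Finset.mem_range.1 ht), by simpa using ht⟩
  have hmono : l.countP (b < ·) ≤ l.countP (fun t => ¬ t < b) :=
    List.countP_mono_left fun t _ => by simp only [decide_eq_true_eq]; omega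
  have := List.length_eq_countP_add_countP (· < b) (l := l)
  simp only [decide_eq_true_eq] at this
  omega

theorem crowdedSet_of_le_card {L : Finset ℕ} {m δ : ℕ} (hmδ : m < δ)
    (h : δ + 4 ≤ 2 * (L.filter fun t => m ≤ t ∧ t ≤ δ).card + m) : CrowdedSet L := by
  -- `[m, m + 2x]` with `x = ⌈(δ - m) / 2⌉` covers `[m, δ]` and has more than `x + 1` points of `L`
  obtain ⟨x, hx⟩ : ∃ x, x = (δ - m + 1) / 2 := ⟨_, rfl⟩
  refine ⟨x, m, by omega, ?_⟩
  have hsub : (L.filter fun t => m ≤ t ∧ t ≤ δ) ⊆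
      L.filter fun t : ℕ => (m : ℤ) ≤ t ∧ (t : ℤ) ≤ m + 2 * x := by
    intro t
    simp only [Finset.mem_filter]
    rintro ⟨ht, hmt, htδ⟩
    exact ⟨ht, by omega, by omega⟩
  have := Finset.card_le_card hsub
  omega

theorem Finset.add_three_le_min'_add_card {C : Finset ℕ} {b z : ℕ} (hz : z ∈ C)
    (hbz : b + C.card < z) (hC : ∀ t ∈ C, b < t) : b + 3 ≤ C.min' ⟨z, hz⟩ + C.card := by
  have hmin := hC _ (C.min'_mem ⟨z, hz⟩)
  have hpos : 0 < C.card := Finset.card_pos.2 ⟨z, hz⟩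
  by_cases hone : C.card = 1
  · have : C.min' ⟨z, hz⟩ = z := Finset.card_le_one.1 hone.le _ (C.min'_mem _) z hz
    omega
  · omega

namespace TwoRowRSK

/-- The state of the simultaneous insertion of the word `f` still to come after `arrv` and after
`arrw`, whose tableaux `(v₁, v₂)` and `(w₁, w₂)` differ only in the position of `δ`: first row
for `arrv`, second row for `arrw`.  The `potential` is what makes the final second row crowded
in the window `[m, δ]`. -/
structure Coupled (m δ : ℕ) (arrv arrw f v₁ v₂ w₁ w₂ : List ℕ) : Prop where
  runV : Run arrv v₁ v₂
  runW : Run arrw w₁ w₂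
  avoidsV : (arrv ++ f).Avoids321
  avoidsW : (arrw ++ f).Avoids321
  nodup : (arrw ++ f).Nodup
  closed : ∀ u ∈ arrw ++ f, ∀ t < u, t ∈ arrw ++ f
  row₁ : v₁.toFinset = insert δ w₁.toFinset
  row₂ : w₂.toFinset = insert δ v₂.toFinset
  lt : m < δ
  row₁_small_lt : ∀ t ∈ w₁, t < m → ∀ x ∈ f, t < x
  rest_small_lt : ∀ x y, [x, y] <+ f → x < m → x < y
  potential : δ + 4 ≤ 2 * w₂.countP (fun t => m ≤ t ∧ t ≤ δ) + f.countP (· < δ) + m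

namespace Coupled

variable {m δ : ℕ} {arrv arrw f v₁ v₂ w₁ w₂ : List ℕ}

theorem mem_v₁ (C : Coupled m δ arrv arrw f v₁ v₂ w₁ w₂) (t : ℕ) : t ∈ v₁ ↔ t = δ ∨ t ∈ w₁ := by
  simpa using Finset.ext_iff.1 C.row₁ t

theorem mem_w₂ (C : Coupled m δ arrv arrw f v₁ v₂ w₁ w₂) (t : ℕ) : t ∈ w₂ ↔ t = δ ∨ t ∈ v₂ := by
  simpa using Finset.ext_iff.1 C.row₂ t

theorem notMem_w₁ (C : Coupled m δ arrv arrw f v₁ v₂ w₁ w₂) : δ ∉ w₁ :=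
  fun h => C.runW.disjoint δ h ((C.mem_w₂ δ).2 (Or.inl rfl))

theorem mem_arrv (C : Coupled m δ arrv arrw f v₁ v₂ w₁ w₂) (t : ℕ) : t ∈ arrv ↔ t ∈ arrw := by
  rw [C.runV.mem_iff, C.runW.mem_iff, C.mem_v₁, C.mem_w₂]
  tauto

variable {x : ℕ}

theorem head_notMem_arrw (C : Coupled m δ arrv arrw (x :: f) v₁ v₂ w₁ w₂) : x ∉ arrw :=
  fun h => (List.nodup_append.1 C.nodup).2.2 x h x (by simp) rfl

theorem head_notMem_arrv (C : Coupled m δ arrv arrw (x :: f) v₁ v₂ w₁ w₂) : x ∉ arrv :=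
  fun h => C.head_notMem_arrw ((C.mem_arrv x).1 h)

theorem head_notMem_w₁ (C : Coupled m δ arrv arrw (x :: f) v₁ v₂ w₁ w₂) : x ∉ w₁ :=
  fun h => C.head_notMem_arrw ((C.runW.mem_iff x).2 (Or.inl h))

theorem avoidsV_append (C : Coupled m δ arrv arrw (x :: f) v₁ v₂ w₁ w₂) :
    (arrv ++ [x]).Avoids321 :=
  C.avoidsV.sublist (by simp)

theorem avoidsW_append (C : Coupled m δ arrv arrw (x :: f) v₁ v₂ w₁ w₂) :
    (arrw ++ [x]).Avoids321 :=
  C.avoidsW.sublist (by simp)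

theorem next {δ' : ℕ} {v₁' v₂' w₁' w₂' : List ℕ} (C : Coupled m δ arrv arrw (x :: f) v₁ v₂ w₁ w₂)
    (runV : Run (arrv ++ [x]) v₁' v₂') (runW : Run (arrw ++ [x]) w₁' w₂')
    (hw₁' : ∀ t ∈ w₁', t ∈ w₁ ∨ t = x)
    (row₁ : v₁'.toFinset = insert δ' w₁'.toFinset) (row₂ : w₂'.toFinset = insert δ' v₂'.toFinset)
    (lt : m < δ')
    (potential : δ' + 4 ≤ 2 * w₂'.countP (fun t => m ≤ t ∧ t ≤ δ') + f.countP (· < δ') + m) :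
    Coupled m δ' (arrv ++ [x]) (arrw ++ [x]) f v₁' v₂' w₁' w₂' where
  runV := runV
  runW := runW
  avoidsV := by simpa using C.avoidsV
  avoidsW := by simpa using C.avoidsW
  nodup := by simpa using C.nodup
  closed := by simpa using C.closed
  row₁ := row₁
  row₂ := row₂
  lt := lt
  row₁_small_lt t ht htm y hy := by
    rcases hw₁' t ht with ht | rfl
    · exact C.row₁_small_lt t ht htm y (List.mem_cons_of_mem _ hy)
    · exact C.rest_small_lt t y (List.cons_sublist_cons.2 (List.singleton_sublist.2 hy)) htm
  rest_small_lt a b hab := C.rest_small_lt a b (hab.cons x)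
  potential := potential

theorem step_append (C : Coupled m δ arrv arrw (x :: f) v₁ v₂ w₁ w₂) (hδx : δ < x)
    (hlt : ∀ y ∈ w₁, y < x) :
    Coupled m δ (arrv ++ [x]) (arrw ++ [x]) f (v₁ ++ [x]) v₂ (w₁ ++ [x]) w₂ := by
  have hltv : ∀ y ∈ v₁, y < x := fun y hy => by
    rcases (C.mem_v₁ y).1 hy with rfl | hy
    exacts [hδx, hlt y hy]
  refine C.next (C.runV.append C.head_notMem_arrv hltv) (C.runW.append C.head_notMem_arrw hlt)
    (by simp) ?_ C.row₂ C.lt ?_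
  · rw [toFinset_append_singleton, toFinset_append_singleton, C.row₁, Finset.insert_comm]
  · have := C.potential
    simp only [List.countP_cons, decide_eq_true_eq, if_neg (not_lt.2 hδx.le)] at this
    omega

theorem step_bump {β : ℕ} (C : Coupled m δ arrv arrw (x :: f) v₁ v₂ w₁ w₂) (hβ : β ∈ w₁)
    (hxβ : x < β) (hmin : ∀ y ∈ w₁, x < y → β ≤ y) (hcross : ¬ (x < δ ∧ δ < β)) :
    Coupled m δ (arrv ++ [x]) (arrw ++ [x]) f (replaceEntry v₁ β x) (v₂ ++ [β])
      (replaceEntry w₁ β x) (w₂ ++ [β]) := by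
  have hδβ : δ ≠ β := fun h => C.notMem_w₁ (h ▸ hβ)
  have hβv : β ∈ v₁ := (C.mem_v₁ β).2 (Or.inr hβ)
  have hminv : ∀ y ∈ v₁, x < y → β ≤ y := fun y hy hxy => by
    rcases (C.mem_v₁ y).1 hy with rfl | hy
    · omega
    · exact hmin y hy hxy
  refine C.next (C.runV.bump C.head_notMem_arrv hβv hxβ hminv C.avoidsV_append)
    (C.runW.bump C.head_notMem_arrw hβ hxβ hmin C.avoidsW_append)
    (fun t ht => by rw [mem_replaceEntry hβ] at ht; tauto) ?_ ?_ C.lt ?_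
  · rw [toFinset_replaceEntry hβv, toFinset_replaceEntry hβ, C.row₁,
      Finset.erase_insert_of_ne hδβ, Finset.insert_comm]
  · rw [toFinset_append_singleton, toFinset_append_singleton, C.row₂, Finset.insert_comm]
  · -- when `x < δ`, the bumped `β` lies in `[m, δ]`: first-row entries below `m` are below `x`
    have hβm : x < δ → m ≤ β := fun _ => by
      by_contra! hβm
      exact absurd (C.row₁_small_lt β hβ hβm x (by simp)) (by omega)
    have := C.potential
    simp only [List.countP_cons, List.countP_append,
      decide_eq_true_eq] at this ⊢
    split_ifs at this ⊢ <;> omega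

theorem sub_le_countP_between {β : ℕ} (C : Coupled m δ arrv arrw (x :: f) v₁ v₂ w₁ w₂)
    (hβ : β ∈ w₁) (hmin : ∀ y ∈ w₁, x < y → β ≤ y) (hxδ : x < δ) :
    β - δ - 1 ≤ (w₂ ++ f).countP (fun t => δ < t ∧ t < β) := by
  have hβarr : β ∈ arrw ++ x :: f := List.mem_append_left _ ((C.runW.mem_iff β).2 (Or.inl hβ))
  -- values in `(δ, β)` are letters, but neither `x` nor in the first row (`β` is least above `x`)
  have hsub : ∀ t ∈ Finset.Ioo δ β, t ∈ w₂ ++ f ∧ decide (δ < t ∧ t < β) := fun t ht => by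
    rw [Finset.mem_Ioo] at ht
    refine ⟨?_, by simpa using ht⟩
    rcases List.mem_append.1 (C.closed β hβarr t ht.2) with h | h
    · rcases (C.runW.mem_iff t).1 h with h | h
      · exact absurd (hmin t h (by omega)) (by omega)
      · exact List.mem_append_left _ h
    · rcases List.mem_cons.1 h with h | h
      · omega
      · exact List.mem_append_right _ h
  simpa using List.card_le_countP hsub

theorem step_jump {β : ℕ} (C : Coupled m δ arrv arrw (x :: f) v₁ v₂ w₁ w₂) (hβ : β ∈ w₁)
    (hxβ : x < β) (hmin : ∀ y ∈ w₁, x < y → β ≤ y) (hxδ : x < δ) (hδβ : δ < β) :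
    Coupled m β (arrv ++ [x]) (arrw ++ [x]) f (replaceEntry v₁ δ x) (v₂ ++ [δ])
      (replaceEntry w₁ β x) (w₂ ++ [β]) := by
  have hδv : δ ∈ v₁ := (C.mem_v₁ δ).2 (Or.inl rfl)
  have hminv : ∀ y ∈ v₁, x < y → δ ≤ y := fun y hy hxy => by
    rcases (C.mem_v₁ y).1 hy with rfl | hy
    · exact le_rfl
    · exact (hmin y hy hxy).trans' hδβ.le
  refine C.next (C.runV.bump C.head_notMem_arrv hδv hxδ hminv C.avoidsV_append)
    (C.runW.bump C.head_notMem_arrw hβ hxβ hmin C.avoidsW_append)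
    (fun t ht => by rw [mem_replaceEntry hβ] at ht; tauto) ?_ ?_ (C.lt.trans hδβ) ?_
  · rw [toFinset_replaceEntry hδv, toFinset_replaceEntry hβ, C.row₁,
      Finset.erase_insert (by simpa using C.notMem_w₁), Finset.insert_comm,
      Finset.insert_erase (by simpa using hβ)]
  · rw [toFinset_append_singleton, toFinset_append_singleton, C.row₂]
  · -- widening the window from `[m, δ]` to `[m, β]` is paid for by `β` and by `hgap`
    have hgap := C.sub_le_countP_between hβ hmin hxδ
    have hmδ := C.lt
    have hw₂ := List.countP_add_countP_le (l := w₂) (p := fun t => m ≤ t ∧ t ≤ δ)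
      (q := fun t => δ < t ∧ t < β) (r := fun t => m ≤ t ∧ t ≤ β)
      (fun t => by simp only [decide_eq_true_eq]; omega)
      (fun t => by simp only [decide_eq_true_eq]; omega)
    have hf := List.countP_add_countP_le (l := f) (p := (· < δ)) (q := fun t => δ < t ∧ t < β)
      (r := (· < β)) (fun t => by simp only [decide_eq_true_eq]; omega)
      (fun t => by simp only [decide_eq_true_eq]; omega)
    have := C.potential
    simp only [List.countP_cons, List.countP_append,
      decide_eq_true_eq, if_pos hxδ] at this hgap ⊢
    simp only [le_refl, and_true, if_pos (C.lt.trans hδβ).le]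
    omega

theorem rskList_eq_of_merge (C : Coupled m δ arrv arrw (x :: f) v₁ v₂ w₁ w₂) (hxδ : x < δ)
    (hlt : ∀ y ∈ w₁, y < x) : RSKList (arrv ++ [x]) = RSKList (arrw ++ [x]) := by
  have hδv : δ ∈ v₁ := (C.mem_v₁ δ).2 (Or.inl rfl)
  have hminv : ∀ y ∈ v₁, x < y → δ ≤ y := fun y hy hxy => by
    rcases (C.mem_v₁ y).1 hy with rfl | hy
    · exact le_rfl
    · exact absurd (hlt y hy) (by omega)
  have Rv := C.runV.bump C.head_notMem_arrv hδv hxδ hminv C.avoidsV_append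
  have Rw := C.runW.append C.head_notMem_arrw hlt
  have h₁ : replaceEntry v₁ δ x = w₁ ++ [x] := by
    refine Rv.sorted₁.eq_of_mem_iff Rw.sorted₁ fun t => ?_
    rw [mem_replaceEntry hδv, C.mem_v₁, List.mem_append, List.mem_singleton]
    have := C.notMem_w₁
    constructor
    · rintro (⟨h | h, h'⟩ | h) <;> tauto
    · rintro (h | h)
      · exact Or.inl ⟨Or.inr h, fun h' => this (h' ▸ h)⟩
      · exact Or.inr h
  have h₂ : v₂ ++ [δ] = w₂ := by
    refine Rv.sorted₂.eq_of_mem_iff C.runW.sorted₂ fun t => ?_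
    rw [List.mem_append, List.mem_singleton, C.mem_w₂]
    tauto
  rw [Rv.tableau_eq, Rw.tableau_eq, h₁, h₂]

theorem step (C : Coupled m δ arrv arrw (x :: f) v₁ v₂ w₁ w₂) :
    RSKList (arrv ++ [x]) = RSKList (arrw ++ [x]) ∨
      ∃ δ' v₁' v₂' w₁' w₂', Coupled m δ' (arrv ++ [x]) (arrw ++ [x]) f v₁' v₂' w₁' w₂' := by
  have hδx : δ ≠ x := by
    rintro rfl
    exact C.head_notMem_arrw ((C.runW.mem_iff δ).2 (Or.inr ((C.mem_w₂ δ).2 (Or.inl rfl))))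
  by_cases hbig : ∃ y ∈ w₁, x < y
  · obtain ⟨β, hβ, hxβ, hmin⟩ := exists_least_gt hbig
    by_cases hcross : x < δ ∧ δ < β
    · exact Or.inr ⟨_, _, _, _, _, C.step_jump hβ hxβ hmin hcross.1 hcross.2⟩
    · exact Or.inr ⟨_, _, _, _, _, C.step_bump hβ hxβ hmin hcross⟩
  · push Not at hbig
    have hlt : ∀ y ∈ w₁, y < x :=
      fun y hy => lt_of_le_of_ne (hbig y hy) fun h => C.head_notMem_w₁ (h ▸ hy)
    rcases lt_or_gt_of_ne hδx with hδx | hxδ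
    · exact Or.inr ⟨_, _, _, _, _, C.step_append hδx hlt⟩
    · exact Or.inl (C.rskList_eq_of_merge hxδ hlt)

theorem rskList_eq_or_crowded (C : Coupled m δ arrv arrw f v₁ v₂ w₁ w₂) :
    RSKList (arrv ++ f) = RSKList (arrw ++ f) ∨ CrowdedSet (Row2 (RSKList (arrw ++ f))) := by
  induction f generalizing δ arrv arrw v₁ v₂ w₁ w₂ with
  | nil =>
    right
    have hw₂ : w₂ ≠ [] := List.ne_nil_of_mem ((C.mem_w₂ δ).2 (Or.inl rfl))
    have hw₁ : w₁ ≠ [] := fun h => hw₂ (C.runW.eq_nil h)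
    have hrow : Row2 (RSKList (arrw ++ [])) = w₂.toFinset := by
      simp [C.runW.tableau_eq, tableau, hw₁, hw₂, Row2]
    have hcard : (w₂.toFinset.filter fun t => m ≤ t ∧ t ≤ δ).card =
        w₂.countP (fun t => m ≤ t ∧ t ≤ δ) := by
      rw [List.countP_eq_length_filter, ← List.toFinset_card_of_nodup
        (C.runW.sorted₂.nodup.filter _), List.toFinset_filter]
      simp only [decide_eq_true_eq]
    rw [hrow]
    exact crowdedSet_of_le_card C.lt (by simpa [hcard] using C.potential)
  | cons x f ih =>
    rcases C.step with heq | ⟨δ', v₁', v₂', w₁', w₂', C'⟩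
    · left
      rw [← List.singleton_append, ← List.append_assoc, ← List.append_assoc,
        RSKList_append (arrv ++ [x]), RSKList_append (arrw ++ [x]), heq]
    · simpa using ih C'

end Coupled

theorem rskList_eq_of_exists_between {p r₁ r₂ : List ℕ} {a b : ℕ} (R : Run p r₁ r₂)
    (ha : a ∉ p) (hb : b ∉ p) (havoidv : (p ++ [b]).Avoids321)
    (havoidw : (p ++ [a, b]).Avoids321) (hba : b < a) (hlt : ∀ y ∈ r₁, y < a)
    (hbig : ∃ y ∈ r₁, b < y) : RSKList (p ++ [b, a]) = RSKList (p ++ [a, b]) := by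
  obtain ⟨z, hz, hbz, hmin⟩ := exists_least_gt hbig
  have hza : z ≠ a := (hlt z hz).ne
  have Rv := (R.bump hb hz hbz hmin havoidv).append (x := a) (by simp [ha, hba.ne']) fun y hy => by
    rw [mem_replaceEntry hz] at hy
    rcases hy with ⟨hy, -⟩ | rfl
    exacts [hlt y hy, hba]
  have Rw := (R.append ha hlt).bump (x := b) (by simp [hb, hba.ne]) (List.mem_append_left _ hz) hbz
    (fun y hy hby => by
      rcases List.mem_append.1 hy with hy | hy
      · exact hmin y hy hby
      · exact (List.mem_singleton.1 hy).symm ▸ (hlt z hz).le)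
    (by simpa using havoidw)
  have hrow : replaceEntry (r₁ ++ [a]) z b = replaceEntry r₁ z b ++ [a] := by
    simp [hza.symm]
  rw [show p ++ [b, a] = p ++ [b] ++ [a] by simp, show p ++ [a, b] = p ++ [a] ++ [b] by simp,
    Rv.tableau_eq, Rw.tableau_eq, hrow]

theorem Run.append_pair_of_row₁_lt {p r₁ r₂ : List ℕ} {a b : ℕ} (R : Run p r₁ r₂)
    (hap : a ∉ p) (hbp : b ∉ p) (hba : b < a) (hr₁b : ∀ y ∈ r₁, y < b)
    (havoid : (p ++ [a] ++ [b]).Avoids321) :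
    Run (p ++ [b] ++ [a]) (r₁ ++ [b] ++ [a]) r₂ ∧
      Run (p ++ [a] ++ [b]) (r₁ ++ [b]) (r₂ ++ [a]) := by
  have hr₁a : ∀ y ∈ r₁, y < a := fun y hy => (hr₁b y hy).trans hba
  refine ⟨(R.append hbp hr₁b).append (by simp [hap, hba.ne']) fun y hy => ?_, ?_⟩
  · rcases List.mem_append.1 hy with hy | hy
    exacts [hr₁a y hy, (List.mem_singleton.1 hy) ▸ hba]
  · have hrow : replaceEntry (r₁ ++ [a]) a b = r₁ ++ [b] := by
      simp [replaceEntry_eq_self fun h => (hr₁a a h).false]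
    rw [← hrow]
    refine (R.append hap hr₁a).bump (by simp [hbp, hba.ne]) (by simp) hba (fun y hy hby => ?_)
      havoid
    rcases List.mem_append.1 hy with hy | hy
    · exact absurd (hr₁b y hy) (by omega)
    · exact (List.mem_singleton.1 hy).ge

theorem exists_potential {p s r₂ : List ℕ} {a b : ℕ} (hp : p.Nodup)
    (hclosed : ∀ u ∈ p ++ a :: b :: s, ∀ t < u, t ∈ p ++ a :: b :: s)
    (hpa : ∀ t ∈ p, t < a) (hsb : ∀ t ∈ s, b < t) (hr₂ : ∀ t ∈ p, b < t → t ∈ r₂)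
    (hba : b < a) (hsupp : ∃ z ∈ p ++ [b], p.length < z) :
    ∃ m < a, a + 4 ≤
      2 * (r₂ ++ [a]).countP (fun t => m ≤ t ∧ t ≤ a) + s.countP (· < a) + m := by
  have hmem : ∀ t < a, t ∈ p ∨ t = b ∨ t ∈ s := fun t ht => by
    have := hclosed a (by simp) t ht
    simp only [List.mem_append, List.mem_cons] at this
    have := ht.ne
    tauto
  -- the support condition makes `C` large: `min C + #C ≥ b + 3`
  set C := (p.filter (b < ·)).toFinset
  have hmemC : ∀ t, t ∈ C ↔ t ∈ p ∧ b < t := by simp [C]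
  have hC : C.card = p.countP (b < ·) := by
    rw [List.toFinset_card_of_nodup (hp.filter _), List.countP_eq_length_filter]
  have hlength := add_countP_lt_le_length (l := p) fun t htb => by
    rcases hmem t (htb.trans hba) with h | h | h
    · exact h
    · omega
    · exact absurd (hsb t h) (by omega)
  obtain ⟨z, hzp, hz⟩ := hsupp
  replace hzp : z ∈ p := (List.mem_append.1 hzp).resolve_right fun h => by
    rw [List.mem_singleton] at h
    omega
  have hzC : z ∈ C := (hmemC z).2 ⟨hzp, by omega⟩
  set m := C.min' ⟨z, hzC⟩
  have hmC := (hmemC m).1 (C.min'_mem _)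
  have hkey := Finset.add_three_le_min'_add_card hzC (by omega) fun t ht => ((hmemC t).1 ht).2
  have hN : C.card ≤ r₂.countP (fun t => m ≤ t ∧ t ≤ a) :=
    List.card_le_countP fun t ht => by
      have := (hmemC t).1 ht
      exact ⟨hr₂ t this.1 this.2, by simpa using ⟨C.min'_le t ht, (hpa t this.1).le⟩⟩
  have hA : a - b - 1 ≤ (p ++ s).countP (fun t => b < t ∧ t < a) := by
    simpa using List.card_le_countP (s := Finset.Ioo b a) (l := p ++ s)
      (p := fun t => b < t ∧ t < a) fun t ht => by
        rw [Finset.mem_Ioo] at ht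
        refine ⟨?_, by simpa using ht⟩
        rcases hmem t ht.2 with h | h | h
        · exact List.mem_append_left _ h
        · omega
        · exact List.mem_append_right _ h
  have hAp : p.countP (fun t => b < t ∧ t < a) ≤ p.countP (b < ·) :=
    List.countP_mono_left fun t _ => by simp only [decide_eq_true_eq]; omega
  have hAs : s.countP (fun t => b < t ∧ t < a) ≤ s.countP (· < a) :=
    List.countP_mono_left fun t _ => by simp only [decide_eq_true_eq]; omega
  refine ⟨m, hpa m hmC.1, ?_⟩
  rw [List.countP_append] at hA ⊢
  simp only [List.countP_singleton, decide_eq_true_eq, le_refl, and_true,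
    if_pos (hpa m hmC.1).le]
  omega

theorem exists_coupled {p s r₁ r₂ : List ℕ} {a b : ℕ} (R : Run p r₁ r₂)
    (havoidv : (p ++ b :: a :: s).Avoids321) (havoidw : (p ++ a :: b :: s).Avoids321)
    (hnd : (p ++ a :: b :: s).Nodup)
    (hclosed : ∀ u ∈ p ++ a :: b :: s, ∀ t < u, t ∈ p ++ a :: b :: s)
    (hba : b < a) (hsupp : ∃ z ∈ p ++ [b], p.length < z) (hap : a ∉ p) (hbp : b ∉ p)
    (hpa : ∀ t ∈ p, t < a) (hsb : ∀ t ∈ s, b < t) (hr₁b : ∀ y ∈ r₁, y < b) :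
    ∃ m, Coupled m a (p ++ [b] ++ [a]) (p ++ [a] ++ [b]) s (r₁ ++ [b] ++ [a]) r₂
      (r₁ ++ [b]) (r₂ ++ [a]) := by
  obtain ⟨Rv, Rw⟩ := R.append_pair_of_row₁_lt hap hbp hba hr₁b (havoidw.sublist (by simp))
  have hr₂ : ∀ t ∈ p, b < t → t ∈ r₂ := fun t ht hbt =>
    ((R.mem_iff t).1 ht).resolve_left fun h => absurd (hr₁b t h) (by omega)
  obtain ⟨m, hma, hpot⟩ :=
    exists_potential (hnd.sublist (by simp)) hclosed hpa hsb hr₂ hba hsupp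
  refine ⟨m, Rv, Rw, by simpa using havoidv, by simpa using havoidw, by simpa using hnd,
    by simpa using hclosed, by simp only [toFinset_append_singleton],
    toFinset_append_singleton _ _, hma, fun t ht _ y hy => ?_, fun x y hxy hxm => ?_, hpot⟩
  · have : t ≤ b := by
      rcases List.mem_append.1 ht with ht | ht
      exacts [(hr₁b t ht).le, (List.mem_singleton.1 ht).le]
    exact this.trans_lt (hsb y hy)
  · -- a later letter below `x < a` would complete a `321` with the `a` in front of `s`
    have hs : s <+ p ++ a :: b :: s :=
      ((List.sublist_cons_self b s).cons a).trans (List.sublist_append_right p _)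
    have hxy' : x ≠ y := by simpa using hnd.sublist (hxy.trans hs)
    by_contra! hyx
    exact havoidw y x a ((List.cons_sublist_cons.2 (hxy.cons b)).trans
      (List.sublist_append_right p _)) ⟨lt_of_le_of_ne hyx hxy'.symm, hxm.trans hma⟩

theorem crowded_of_rskList_ne {p s : List ℕ} {a b : ℕ}
    (havoidv : (p ++ b :: a :: s).Avoids321) (havoidw : (p ++ a :: b :: s).Avoids321)
    (hnd : (p ++ a :: b :: s).Nodup)
    (hclosed : ∀ u ∈ p ++ a :: b :: s, ∀ t < u, t ∈ p ++ a :: b :: s)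
    (hba : b < a) (hsupp : ∃ z ∈ p ++ [b], p.length < z)
    (hne : RSKList (p ++ b :: a :: s) ≠ RSKList (p ++ a :: b :: s)) :
    CrowdedSet (Row2 (RSKList (p ++ a :: b :: s))) := by
  have hap : a ∉ p := fun h => (List.nodup_append.1 hnd).2.2 a h a (by simp) rfl
  have hbp : b ∉ p := fun h => (List.nodup_append.1 hnd).2.2 b h b (by simp) rfl
  have hbs : b ∉ s := (List.nodup_cons.1 (List.nodup_cons.1 (List.nodup_append.1 hnd).2.1).2).1
  have hpa : ∀ t ∈ p, t < a := fun t ht => by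
    by_contra! hat
    have hta : t ≠ a := fun h => hap (h ▸ ht)
    exact havoidw b a t ((List.singleton_sublist.2 ht).append (by simp)) ⟨hba, by omega⟩
  have hsb : ∀ t ∈ s, b < t := fun t ht => by
    by_contra! htb
    have htb' : t ≠ b := fun h => hbs (h ▸ ht)
    exact havoidw t b a (by simp [ht]) ⟨by omega, hba⟩
  have hvs : p ++ b :: a :: s = p ++ [b, a] ++ s := by simp
  have hws : p ++ a :: b :: s = p ++ [a, b] ++ s := by simp
  obtain ⟨r₁, r₂, R⟩ := exists_run (l := p) (havoidw.sublist (by simp)) (hnd.sublist (by simp))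
  by_cases hbig : ∃ y ∈ r₁, b < y
  · refine absurd ?_ hne
    rw [hvs, hws, RSKList_append (p ++ [b, a]), RSKList_append (p ++ [a, b]),
      rskList_eq_of_exists_between R hap hbp (havoidv.sublist (by simp))
        (havoidw.sublist (by simp)) hba (fun y hy => hpa y ((R.mem_iff y).2 (Or.inl hy))) hbig]
  push Not at hbig
  have hr₁b : ∀ y ∈ r₁, y < b := fun y hy =>
    lt_of_le_of_ne (hbig y hy) fun h => hbp (h ▸ (R.mem_iff y).2 (Or.inl hy))
  obtain ⟨m, C⟩ := exists_coupled R havoidv havoidw hnd hclosed hba hsupp hap hbp hpa hsb hr₁b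
  rcases C.rskList_eq_or_crowded with h | h
  · exact absurd (by simpa using h) hne
  · simpa using h

end TwoRowRSK

section Permutations

variable {n : ℕ}

theorem mem_oneLine (w : Equiv.Perm (Fin n)) {t : ℕ} : t ∈ oneLine w ↔ t < n := by
  simp only [oneLine, List.mem_ofFn]
  exact ⟨fun ⟨k, hk⟩ => hk ▸ (w k).isLt, fun ht => ⟨w.symm ⟨t, ht⟩, by simp⟩⟩

theorem nodup_oneLine (w : Equiv.Perm (Fin n)) : (oneLine w).Nodup :=
  List.nodup_ofFn.2 fun _ _ h => w.injective (Fin.ext h)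

theorem FullyCommutative.avoids321_oneLine {w : Equiv.Perm (Fin n)} (hw : FullyCommutative w) :
    (oneLine w).Avoids321 := by
  intro x y z hsub ⟨hxy, hyz⟩
  obtain ⟨e, he⟩ := List.sublist_iff_exists_fin_orderEmbedding_get_eq.1 hsub
  have hlen : (oneLine w).length = n := by simp [oneLine]
  let k (j : Fin 3) : Fin n := Fin.cast hlen (e j)
  have hval (j : Fin 3) : (w (k j) : ℕ) = [z, y, x].get j := by
    rw [he j]; simp [oneLine, k]; rfl
  refine hw ⟨k 0, k 1, k 2, e.strictMono (by simp), e.strictMono (by simp), ?_, ?_⟩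
  · rw [Fin.lt_def, hval, hval]; simpa using hxy
  · rw [Fin.lt_def, hval, hval]; simpa using hyz

theorem oneLine_eq_take_append (w : Equiv.Perm (Fin n)) {i : ℕ} (h : i + 1 < n) :
    oneLine w = (oneLine w).take i ++
      (w ⟨i, by omega⟩ : ℕ) :: (w ⟨i + 1, h⟩ : ℕ) :: (oneLine w).drop (i + 2) := by
  have hlen : (oneLine w).length = n := by simp [oneLine]
  conv_lhs => rw [← List.take_append_drop i (oneLine w),
    List.drop_eq_getElem_cons (by omega), List.drop_eq_getElem_cons (by omega)]
  simp [oneLine]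

theorem mul_simpleTr_apply_of_ne (v : Equiv.Perm (Fin n)) {i : ℕ} (h : i + 1 < n)
    {k : Fin n} (hki : (k : ℕ) ≠ i) (hki' : (k : ℕ) ≠ i + 1) : (v * simpleTr i h) k = v k := by
  rw [Equiv.Perm.mul_apply, simpleTr, Equiv.swap_apply_of_ne_of_ne]
  · exact fun h => hki (by simp [h])
  · exact fun h => hki' (by simp [h])

theorem oneLine_mul_simpleTr (v : Equiv.Perm (Fin n)) {i : ℕ} (h : i + 1 < n) :
    ∃ p s : List ℕ, p.length = i ∧
      oneLine v = p ++ (v ⟨i, by omega⟩ : ℕ) :: (v ⟨i + 1, h⟩ : ℕ) :: s ∧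
      oneLine (v * simpleTr i h) = p ++ (v ⟨i + 1, h⟩ : ℕ) :: (v ⟨i, by omega⟩ : ℕ) :: s := by
  set w := v * simpleTr i h
  have hlen (u : Equiv.Perm (Fin n)) : (oneLine u).length = n := by simp [oneLine]
  have htake : (oneLine w).take i = (oneLine v).take i :=
    List.ext_getElem (by simp [hlen]) fun k hk _ => by
      simp only [List.getElem_take, oneLine, List.getElem_ofFn]
      rw [mul_simpleTr_apply_of_ne v h] <;> simp at hk ⊢ <;> omega
  have hdrop : (oneLine w).drop (i + 2) = (oneLine v).drop (i + 2) :=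
    List.ext_getElem (by simp [hlen]) fun k _ _ => by
      simp only [List.getElem_drop, oneLine, List.getElem_ofFn]
      rw [mul_simpleTr_apply_of_ne v h] <;> simp <;> omega
  refine ⟨(oneLine v).take i, (oneLine v).drop (i + 2), by simp [hlen]; omega,
    oneLine_eq_take_append v h, ?_⟩
  rw [oneLine_eq_take_append w h, htake, hdrop]
  simp [w, simpleTr]

def inversions (u : Equiv.Perm (Fin n)) : Finset (Fin n × Fin n) :=
  Finset.univ.filter fun q => q.1 < q.2 ∧ u q.2 < u q.1

theorem mem_inversions {u : Equiv.Perm (Fin n)} {q : Fin n × Fin n} :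
    q ∈ inversions u ↔ q.1 < q.2 ∧ u q.2 < u q.1 := by
  simp [inversions]

theorem simpleTr_lt_simpleTr {i : ℕ} (h : i + 1 < n) {p q : Fin n} (hpq : p < q)
    (hne : ¬ ((p : ℕ) = i ∧ (q : ℕ) = i + 1)) : simpleTr i h p < simpleTr i h q := by
  have hval (x : Fin n) :
      (simpleTr i h x : ℕ) = if (x : ℕ) = i then i + 1 else if (x : ℕ) = i + 1 then i else x := by
    rw [simpleTr, Equiv.swap_apply_def]
    split_ifs <;> simp_all [Fin.ext_iff]
  rw [Fin.lt_def, hval, hval]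
  rw [Fin.lt_def] at hpq
  split_ifs <;> omega

theorem invCount_mul_simpleTr_of_lt (u : Equiv.Perm (Fin n)) {i : ℕ} (h : i + 1 < n)
    (hlt : u ⟨i, by omega⟩ < u ⟨i + 1, h⟩) : invCount (u * simpleTr i h) = invCount u + 1 := by
  set I : Fin n := ⟨i, by omega⟩
  set J : Fin n := ⟨i + 1, h⟩
  set σ := simpleTr i h
  have hσI : σ I = J := Equiv.swap_apply_left _ _
  have hσJ : σ J = I := Equiv.swap_apply_right _ _
  have hσσ (x : Fin n) : σ (σ x) = x := Equiv.swap_apply_self _ _ _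
  have hIJ : I < J := by simp [Fin.lt_def, I, J]
  have hmono {p q : Fin n} (hpq : p < q) (hne : ¬ (p = I ∧ q = J)) : σ p < σ q :=
    simpleTr_lt_simpleTr h hpq fun ⟨hp, hq⟩ => hne ⟨Fin.ext hp, Fin.ext hq⟩
  obtain ⟨τ, hτ⟩ : ∃ τ : Fin n × Fin n → Fin n × Fin n, ∀ q, τ q = (σ q.1, σ q.2) :=
    ⟨_, fun _ => rfl⟩
  have hττ (q : Fin n × Fin n) : τ (τ q) = q := by simp [hτ, hσσ]
  -- `τ = σ × σ` maps the inversions of `u` onto those of `u * σ` other than `(I, J)`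
  have hmem (q : Fin n × Fin n) : q ∈ (inversions u).image τ ↔ τ q ∈ inversions u := by
    rw [Finset.mem_image]
    exact ⟨fun ⟨q', hq', he⟩ => by rwa [← he, hττ], fun hq => ⟨τ q, hq, hττ q⟩⟩
  have hnot : (I, J) ∉ (inversions u).image τ := by
    rw [hmem, mem_inversions, hτ]
    exact fun h => absurd hIJ (not_lt.2 (by simpa [hσI, hσJ] using h.1.le))
  have key : inversions (u * σ) = insert (I, J) ((inversions u).image τ) := by
    ext ⟨p, q⟩
    rw [Finset.mem_insert, hmem, mem_inversions, mem_inversions, hτ]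
    simp only [Equiv.Perm.mul_apply, Prod.mk.injEq]
    constructor
    · rintro ⟨hpq, hu⟩
      by_cases hne : p = I ∧ q = J
      · exact Or.inl hne
      · exact Or.inr ⟨hmono hpq hne, hu⟩
    · rintro (⟨rfl, rfl⟩ | ⟨hpq, hu⟩)
      · exact ⟨hIJ, by rwa [hσI, hσJ]⟩
      · refine ⟨?_, hu⟩
        have := hmono hpq fun ⟨hp, hq⟩ => by
          rw [hp, hq] at hu
          exact absurd hlt (not_lt.2 hu.le)
        rwa [hσσ, hσσ] at this
  change (inversions (u * σ)).card = (inversions u).card + 1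
  rw [key, Finset.card_insert_of_notMem hnot,
    Finset.card_image_of_injective _ (Function.LeftInverse.injective hττ)]

theorem lt_of_invCount_mul_simpleTr (v : Equiv.Perm (Fin n)) {i : ℕ} (h : i + 1 < n)
    (hl : invCount (v * simpleTr i h) = invCount v + 1) : v ⟨i, by omega⟩ < v ⟨i + 1, h⟩ := by
  have hσσ : simpleTr (n := n) i h * simpleTr i h = 1 := Equiv.swap_mul_self _ _
  have hne : v ⟨i, by omega⟩ ≠ v ⟨i + 1, h⟩ := fun he => by simpa using v.injective he
  by_contra! hgt
  have := invCount_mul_simpleTr_of_lt (v * simpleTr i h) h (by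
    simpa [simpleTr] using lt_of_le_of_ne hgt hne.symm)
  rw [mul_assoc, hσσ, mul_one] at this
  omega

end Permutations

/-- **Theorem.** If `v`, `w = v·sᵢ` are fully commutative, `ℓ(w) = ℓ(v)+1`,
`i ∈ supp(v)`, and `P(v) ≠ P(w)`, then `w` is crowded. -/
theorem cover_with_new_tableau_is_crowded {n : ℕ} (v w : Equiv.Perm (Fin n))
    (i : ℕ) (h : i + 1 < n) (hv : FullyCommutative v) (hw : FullyCommutative w)
    (hwv : w = v * simpleTr i h) (hl : invCount w = invCount v + 1)
    (hsupp : i ∈ Supp v) (hP : RSKP v ≠ RSKP w) :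
    CrowdedSet (Row2 (RSKP w)) := by
  subst hwv
  obtain ⟨p, s, hp, hpv, hpw⟩ := oneLine_mul_simpleTr v h
  have hsupp' : ∃ z ∈ p ++ [(v ⟨i, by omega⟩ : ℕ)], p.length < z := by
    obtain ⟨j, hji, hij⟩ := hsupp
    have hj : (v j : ℕ) ∈ (oneLine v).take (i + 1) :=
      List.mem_iff_getElem.2 ⟨j, by simp [oneLine]; omega, by simp [oneLine]⟩
    rw [hpv, List.take_append, List.take_of_length_le (by omega), hp, Nat.add_sub_cancel_left]
      at hj
    exact ⟨v j, by simpa using hj, hp ▸ hij⟩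
  rw [RSKP, RSKP, hpv, hpw] at hP
  rw [RSKP, hpw]
  refine TwoRowRSK.crowded_of_rskList_ne (hpv ▸ hv.avoids321_oneLine)
    (hpw ▸ hw.avoids321_oneLine) (hpw ▸ nodup_oneLine _) (fun u hu t ht => ?_)
    (lt_of_invCount_mul_simpleTr v h hl) hsupp' hP
  rw [← hpw, mem_oneLine] at hu ⊢
  omega
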